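/- Let T = T_{γ₁,γ₂} with associated point y = y(T), and let g = α^t with t ∈ ℤ_{≥0} or g = α^t·w with t ∈ ℤ_{>0}. If t > 0 or y ≠ 0, then K ∩ g·T·g^{−1} = Z·(K ∩ g·T_{0+}·g^{−1}), where T_{0+} := T ∩ G_{y,0+} and G_{y,0+} := ∪_{r>0} G_{y,r}. -/

import Mathlib

open Matrix
open scoped Pointwise

noncomputable section

/-- Ambient data for the paper: `E` is the unramified quadratic extension `F(√ε)` of a
nonarchimedean local field `F` of odd residual characteristic.  The field `F` is realized
as the fixed field of the nontrivial `F`-automorphism `σ` of `E`; `ν` is the discrete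
valuation of `E` (extending the valuation of `F` normalized by `ν ϖ = 1` at a uniformizer
`ϖ` of `F`, and still surjecting onto `ℤ` since `E/F` is unramified); `q` is the (odd)
cardinality of the residue field of `F` (so `q²` is that of `E`); `ε ∈ O_F^×` is a
non-square unit and `sqε = √ε` generates `E` over `F`.  The standard facts about the
norm map and squares are included as fields. -/
structure Setting (E : Type*) [Field E] where
  /-- the nontrivial `F`-automorphism of `E`, written `x̄ = σ x` -/
  σ : E →+* E
  σσ : ∀ x, σ (σ x) = x
  σ_ne_id : σ ≠ RingHom.id E
  /-- the valuation (only its values at nonzero elements matter) -/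
  ν : E → ℤ
  ν_mul : ∀ {x y : E}, x ≠ 0 → y ≠ 0 → ν (x * y) = ν x + ν y
  ν_add : ∀ {x y : E}, x ≠ 0 → y ≠ 0 → x + y ≠ 0 → min (ν x) (ν y) ≤ ν (x + y)
  ν_σ : ∀ x, ν (σ x) = ν x
  ν_surj : ∀ n : ℤ, ∃ x : E, x ≠ 0 ∧ ν x = n
  /-- a uniformizer of `F` -/
  ϖ : E
  ϖ_ne_zero : ϖ ≠ 0
  ϖ_fixed : σ ϖ = ϖ
  ν_ϖ : ν ϖ = 1
  /-- the residual cardinality of `F` -/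
  q : ℕ
  q_odd : Odd q
  one_lt_q : 1 < q
  /-- a non-square unit of `O_F` -/
  ε : E
  ε_fixed : σ ε = ε
  ε_ne_zero : ε ≠ 0
  ν_ε : ν ε = 0
  ε_nonsquare : ¬ ∃ f : E, σ f = f ∧ f * f = ε
  /-- a square root `√ε ∈ E` of `ε` -/
  sqε : E
  sqε_sq : sqε * sqε = ε
  sqε_conj : σ sqε = -sqε
  /-- `E = F(√ε)` -/
  generates : ∀ x : E, ∃ a b : E, σ a = a ∧ σ b = b ∧ x = a + b * sqε
  /-- the norm maps `O_E^×` onto `O_F^×` -/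
  norm_surj_units : ∀ y : E, σ y = y → y ≠ 0 → ν y = 0 →
    ∃ x : E, x ≠ 0 ∧ ν x = 0 ∧ x * σ x = y
  /-- the norm maps `1 + p_E^d` onto `1 + p_F^d` for every `d ≥ 1` -/
  norm_surj_one_add : ∀ d : ℤ, 1 ≤ d → ∀ y : E, σ y = y → (y - 1 = 0 ∨ d ≤ ν (y - 1)) →
    ∃ x : E, (x - 1 = 0 ∨ d ≤ ν (x - 1)) ∧ x * σ x = y
  /-- the residue field of `F` has `q` elements -/
  residue_F : ∃ R : Finset E, R.card = q ∧ (∀ r ∈ R, σ r = r ∧ (r = 0 ∨ 0 ≤ ν r)) ∧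
    ∀ x : E, σ x = x → (x = 0 ∨ 0 ≤ ν x) →
      ∃! r, r ∈ R ∧ (x - r = 0 ∨ 1 ≤ ν (x - r))
  /-- the residue field of `E` has `q²` elements -/
  residue_E : ∃ R : Finset E, R.card = q ^ 2 ∧ (∀ r ∈ R, r = 0 ∨ 0 ≤ ν r) ∧
    ∀ x : E, (x = 0 ∨ 0 ≤ ν x) →
      ∃! r, r ∈ R ∧ (x - r = 0 ∨ 1 ≤ ν (x - r))
  /-- Hensel: a unit of `O_E` that is a square modulo `p_E` is a square (residue char. odd) -/
  hensel_sq : ∀ u w : E, u ≠ 0 → ν u = 0 → w ≠ 0 → ν w = 0 →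
    (w * w - u = 0 ∨ 1 ≤ ν (w * w - u)) → ∃ v : E, v * v = u

namespace Setting

variable {E : Type*} [Field E] (S : Setting E)

/-- `x` lies in the ring of integers `O_E`. -/
def inOE (x : E) : Prop := x = 0 ∨ 0 ≤ S.ν x

/-- `x` lies in the (fractional, if `d ≤ 0`) ideal `p_E^d`. -/
def inpE (d : ℤ) (x : E) : Prop := x = 0 ∨ d ≤ S.ν x

/-- `x` is a unit of `O_E`. -/
def unitOE (x : E) : Prop := x ≠ 0 ∧ S.ν x = 0

/-- `x` lies in the subfield `F` (the fixed field of `σ`). -/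
def inF (x : E) : Prop := S.σ x = x

/-- `x` is a unit of `O_F`. -/
def unitOF (x : E) : Prop := S.σ x = x ∧ x ≠ 0 ∧ S.ν x = 0

/-- `x` lies in `E¹`, i.e. has norm one. -/
def normOne (x : E) : Prop := x * S.σ x = 1

/-- `x ∈ √ε·F`. -/
def inSqεF (x : E) : Prop := ∃ f : E, S.σ f = f ∧ x = S.sqε * f

/-- Entrywise application of `σ` to a matrix, `ḡ`. -/
def mbar (g : Matrix (Fin 2) (Fin 2) E) : Matrix (Fin 2) (Fin 2) E :=
  Matrix.of fun i j => S.σ (g i j)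

/-- The antidiagonal matrix `w = [[0,1],[1,0]]` defining the hermitian form. -/
def wmat (_S : Setting E) : Matrix (Fin 2) (Fin 2) E := !![0, 1; 1, 0]

/-- Membership in `G = U(1,1)(F) = {g : ḡᵀ·w·g = w}`. -/
def inG (g : Matrix (Fin 2) (Fin 2) E) : Prop :=
  (S.mbar g)ᵀ * S.wmat * g = S.wmat

/-- `G = U(1,1)(F)`, as a set of 2×2 matrices over `E`. -/
def Gset : Set (Matrix (Fin 2) (Fin 2) E) := {g | S.inG g}

/-- `G_der = SU(1,1)(F) = {g ∈ G : det g = 1}`. -/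
def Gder : Set (Matrix (Fin 2) (Fin 2) E) := {g | S.inG g ∧ g.det = 1}

/-- The standard maximal compact subgroup `K` of `G` (entries in `O_E`). -/
def Kset : Set (Matrix (Fin 2) (Fin 2) E) := {g | S.inG g ∧ ∀ i j, S.inOE (g i j)}

/-- The congruence subgroup `K_d = {k ∈ K : k − 1 ∈ p_E^d·M₂(O_E)}`. -/
def Kfil (d : ℤ) : Set (Matrix (Fin 2) (Fin 2) E) :=
  {g | g ∈ S.Kset ∧ ∀ i j, S.inpE d ((g - 1) i j)}

/-- The subgroup `B` of upper triangular matrices in `K`. -/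
def Bset : Set (Matrix (Fin 2) (Fin 2) E) := {g | g ∈ S.Kset ∧ g 1 0 = 0}

/-- The subgroup `B^op` of lower triangular matrices in `K`. -/
def Bop : Set (Matrix (Fin 2) (Fin 2) E) := {g | g ∈ S.Kset ∧ g 0 1 = 0}

/-- The center `Z = {z·I : z ∈ E¹}` of `G`. -/
def Zset : Set (Matrix (Fin 2) (Fin 2) E) :=
  {g | ∃ z : E, S.normOne z ∧ g = z • (1 : Matrix (Fin 2) (Fin 2) E)}

/-- The matrix `α^t = diag(ϖ^{−t}, ϖ^t)`. -/
def αmat (t : ℕ) : Matrix (Fin 2) (Fin 2) E := !![(S.ϖ ^ t)⁻¹, 0; 0, S.ϖ ^ t]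

/-- The matrix `η = diag(1, ϖ)` (it normalizes `G`). -/
def ηmat : Matrix (Fin 2) (Fin 2) E := !![1, 0; 0, S.ϖ]

/-- The matrix `η⁻¹ = diag(1, ϖ⁻¹)`. -/
def ηinv : Matrix (Fin 2) (Fin 2) E := !![1, 0; 0, S.ϖ⁻¹]

/-- The torus `T_{γ₁,γ₂} = {[[a,bγ₁],[bγ₂,a]] : a·ā + b·b̄·γ₁γ₂ = 1, ā·b ∈ √ε·F}`. -/
def Tset (γ₁ γ₂ : E) : Set (Matrix (Fin 2) (Fin 2) E) :=
  {g | ∃ a b : E, g = !![a, b * γ₁; b * γ₂, a] ∧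
    a * S.σ a + b * S.σ b * (γ₁ * γ₂) = 1 ∧ S.inSqεF (S.σ a * b)}

/-- The Moy–Prasad filtration subgroup `G_{y,r}` of `G` (for `r > 0`). -/
def Gfil (y r : ℚ) : Set (Matrix (Fin 2) (Fin 2) E) :=
  {g | S.inG g ∧ S.inpE ⌈r⌉ (g 0 0 - 1) ∧ S.inpE ⌈r⌉ (g 1 1 - 1) ∧
    S.inpE ⌈r - y⌉ (g 0 1) ∧ S.inpE ⌈r + y⌉ (g 1 0)}

/-- `G_{y,0+} = ⋃_{r>0} G_{y,r}`. -/
def Gfil0plus (y : ℚ) : Set (Matrix (Fin 2) (Fin 2) E) :=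
  {g | ∃ r : ℚ, 0 < r ∧ g ∈ S.Gfil y r}

end Setting

/-!
If `k = g τ g⁻¹ ∈ K` with `τ = [[a, bγ₁], [bγ₂, a]] ∈ T`, integrality of the upper right
entry of `k` bounds the valuation of one off-diagonal entry of `τ`, and `ν γ₂ - ν γ₁ = 2y`
then bounds the other; when `t > 0` or `y ≠ 0` these bounds are those of `G_{y,1/2}` and force
`b b̄ γ₁ γ₂ ∈ p_E`. Hence `a ā ∈ 1 + p_F`, and as the norm maps `1 + p_E` onto `1 + p_F` we can
write `a = z x` with `z ∈ E¹` and `x ∈ 1 + p_E`. Then `z⁻¹ τ ∈ T ∩ G_{y,1/2}` and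
`k = z · (g z⁻¹τ g⁻¹)`.
-/

namespace Setting

variable {E : Type*} [Field E] (S : Setting E)

theorem ν_one : S.ν 1 = 0 := by
  have := S.ν_mul (one_ne_zero (α := E)) one_ne_zero
  rw [mul_one] at this
  omega

theorem ν_inv {x : E} (hx : x ≠ 0) : S.ν x⁻¹ = -S.ν x := by
  have := S.ν_mul hx (inv_ne_zero hx)
  rw [mul_inv_cancel₀ hx, S.ν_one] at this
  omega

theorem ν_neg {x : E} (hx : x ≠ 0) : S.ν (-x) = S.ν x := by
  have hm : S.ν (-1) = 0 := by
    have := S.ν_mul (neg_ne_zero.2 (one_ne_zero (α := E))) (neg_ne_zero.2 one_ne_zero)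
    rw [neg_mul_neg, mul_one, S.ν_one] at this
    omega
  rw [← neg_one_mul, S.ν_mul (neg_ne_zero.2 one_ne_zero) hx, hm, zero_add]

theorem ν_ϖ_pow (t : ℕ) : S.ν (S.ϖ ^ t) = t := by
  induction t with
  | zero => simpa using S.ν_one
  | succ n ih =>
    rw [pow_succ, S.ν_mul (pow_ne_zero n S.ϖ_ne_zero) S.ϖ_ne_zero, ih, S.ν_ϖ]
    push_cast
    ring

variable {S}

theorem σ_ne_zero {x : E} (hx : x ≠ 0) : S.σ x ≠ 0 :=
  (map_ne_zero_iff S.σ (RingHom.injective S.σ)).2 hx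

theorem inpE.mono {m m' : ℤ} {x : E} (hx : S.inpE m x) (h : m' ≤ m) : S.inpE m' x :=
  hx.imp_right h.trans

theorem inpE.mul {m n : ℤ} {x y : E} (hx : S.inpE m x) (hy : S.inpE n y) :
    S.inpE (m + n) (x * y) := by
  rcases eq_or_ne x 0 with rfl | hx0
  · exact Or.inl (zero_mul y)
  rcases eq_or_ne y 0 with rfl | hy0
  · exact Or.inl (mul_zero x)
  have hmx := hx.resolve_left hx0
  have hny := hy.resolve_left hy0
  exact Or.inr (by rw [S.ν_mul hx0 hy0]; omega)

theorem inpE.neg {m : ℤ} {x : E} (hx : S.inpE m x) : S.inpE m (-x) := by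
  rcases eq_or_ne x 0 with rfl | hx0
  · exact Or.inl neg_zero
  exact hx.imp (fun h => absurd h hx0) (fun h => (S.ν_neg hx0).symm ▸ h)

theorem inpE.σ {m : ℤ} {x : E} (hx : S.inpE m x) : S.inpE m (S.σ x) :=
  hx.imp (fun h => by rw [h, map_zero]) (fun h => by rwa [S.ν_σ])

theorem ne_zero_of_inpE_sub_one {u : E} (h : S.inpE 1 (u - 1)) : u ≠ 0 := by
  rintro rfl
  rcases h with h | h
  · simp at h
  · rw [zero_sub, S.ν_neg one_ne_zero, S.ν_one] at h
    omega

theorem normOne.ne_zero {z : E} (hz : S.normOne z) : z ≠ 0 := by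
  rintro rfl
  simp [normOne] at hz

theorem normOne.ν_eq_zero {z : E} (hz : S.normOne z) : S.ν z = 0 := by
  have := S.ν_mul hz.ne_zero (S.σ_ne_zero hz.ne_zero)
  rw [hz, S.ν_one, S.ν_σ] at this
  omega

theorem normOne.inv {z : E} (hz : S.normOne z) : S.normOne z⁻¹ := by
  rw [normOne, map_inv₀, ← mul_inv, hz, inv_one]

theorem normOne.inpE_mul {z : E} (hz : S.normOne z) {m : ℤ} {x : E} (hx : S.inpE m x) :
    S.inpE m (z * x) := by
  simpa using inpE.mul (m := 0) (Or.inr (hz.ν_eq_zero).ge) hx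

theorem exists_normOne_inpE_inv_mul_sub_one {a : E} (ha : S.inpE 1 (a * S.σ a - 1)) :
    ∃ z, S.normOne z ∧ S.inpE 1 (z⁻¹ * a - 1) := by
  have hfix : S.σ (a * S.σ a) = a * S.σ a := by rw [map_mul, S.σσ, mul_comm]
  obtain ⟨x, hx, hxx⟩ := S.norm_surj_one_add 1 le_rfl _ hfix ha
  have ha0 : a * S.σ a ≠ 0 := ne_zero_of_inpE_sub_one ha
  have hx0 : x ≠ 0 := ne_zero_of_inpE_sub_one hx
  -- `x ∈ 1 + p_E` has the same norm as `a`
  refine ⟨a * x⁻¹, ?_, ?_⟩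
  · rw [normOne, map_mul, map_inv₀, mul_mul_mul_comm, ← mul_inv, hxx, mul_inv_cancel₀ ha0]
  · rwa [mul_inv, inv_inv, mul_comm a⁻¹, mul_assoc, inv_mul_cancel₀ (left_ne_zero_of_mul ha0),
      mul_one]

theorem smul_mem_Kset {z : E} (hz : S.normOne z) {k : Matrix (Fin 2) (Fin 2) E}
    (hk : k ∈ S.Kset) : z • k ∈ S.Kset := by
  refine ⟨?_, fun i j => hz.inpE_mul (m := 0) (hk.2 i j)⟩
  have hbar : S.mbar (z • k) = S.σ z • S.mbar k := by
    ext i j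
    simp [mbar]
  rw [inG, hbar, transpose_smul, Matrix.mul_smul, Matrix.smul_mul, Matrix.smul_mul, smul_smul,
    hz, one_smul]
  exact hk.1

theorem smul_mem_Tset {z : E} (hz : S.normOne z) {γ₁ γ₂ : E} {τ : Matrix (Fin 2) (Fin 2) E}
    (hτ : τ ∈ S.Tset γ₁ γ₂) : z • τ ∈ S.Tset γ₁ γ₂ := by
  obtain ⟨a, b, rfl, hnorm, f, hf, hab⟩ := hτ
  refine ⟨z * a, z * b, ?_, ?_, f, hf, ?_⟩
  · ext i j
    fin_cases i <;> fin_cases j <;> simp [mul_assoc]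
  · have hz' : z * S.σ z = 1 := hz
    rw [map_mul, map_mul]
    linear_combination z * S.σ z * hnorm + hz'
  · rw [map_mul, mul_mul_mul_comm, mul_comm (S.σ z), hz, one_mul, hab]

theorem inG_of_mem_Tset {γ₁ γ₂ : E} (hγ₁ : S.σ γ₁ = γ₁) (hγ₂ : S.σ γ₂ = γ₂)
    {τ : Matrix (Fin 2) (Fin 2) E} (hτ : τ ∈ S.Tset γ₁ γ₂) : S.inG τ := by
  obtain ⟨a, b, rfl, hnorm, f, hf, hab⟩ := hτ
  have hab' : a * S.σ b = -(S.sqε * f) := by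
    have := congrArg S.σ hab
    rw [map_mul, S.σσ, map_mul, S.sqε_conj, hf] at this
    linear_combination this
  ext i j
  fin_cases i <;> fin_cases j <;>
    simp only [mbar, wmat, of_apply, cons_val', cons_val_fin_one, cons_val_zero, cons_val_one,
      Fin.zero_eta, Fin.mk_one, Fin.isValue, Matrix.mul_apply, transpose_apply, Fin.sum_univ_two,
      map_mul, hγ₁, hγ₂, mul_zero, mul_one, zero_add, add_zero]
  · linear_combination γ₂ * (hab + hab')
  · linear_combination hnorm
  · linear_combination hnorm
  · linear_combination γ₁ * (hab + hab')

theorem exists_normOne_inv_smul_mem_Gfil {γ₁ γ₂ : E} (hγ₁ : S.σ γ₁ = γ₁)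
    (hγ₂ : S.σ γ₂ = γ₂) {y : ℚ} {m n : ℤ} (hm : 1 / 2 - y ≤ m) (hn : 1 / 2 + y ≤ n)
    {τ : Matrix (Fin 2) (Fin 2) E} (hτ : τ ∈ S.Tset γ₁ γ₂) (h01 : S.inpE m (τ 0 1))
    (h10 : S.inpE n (τ 1 0)) :
    ∃ z, S.normOne z ∧ z⁻¹ • τ ∈ S.Tset γ₁ γ₂ ∩ S.Gfil y (1 / 2) := by
  have hmn : 1 ≤ m + n := by
    have : (1 : ℚ) ≤ m + n := by linarith
    exact_mod_cast this
  obtain ⟨a, b, rfl, hnorm, -⟩ := id hτ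
  change S.inpE m (b * γ₁) at h01
  change S.inpE n (b * γ₂) at h10
  have ha : S.inpE 1 (a * S.σ a - 1) := by
    have h : a * S.σ a - 1 = -(b * γ₁ * S.σ (b * γ₂)) := by
      rw [map_mul, hγ₂]
      linear_combination hnorm
    exact h ▸ ((h01.mul h10.σ).mono hmn).neg
  obtain ⟨z, hz, hza⟩ := exists_normOne_inpE_inv_mul_sub_one ha
  have hT := smul_mem_Tset hz.inv hτ
  have hceil : ⌈(1 / 2 : ℚ)⌉ = 1 := by norm_num
  refine ⟨z, hz, hT, inG_of_mem_Tset hγ₁ hγ₂ hT, hceil ▸ hza, hceil ▸ hza, ?_, ?_⟩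
  · exact (hz.inv.inpE_mul h01).mono (Int.ceil_le.2 hm)
  · exact (hz.inv.inpE_mul h10).mono (Int.ceil_le.2 hn)

theorem conj_mem_Zset_mul {P : Set (Matrix (Fin 2) (Fin 2) E)} {z : E} (hz : S.normOne z)
    {τ g : Matrix (Fin 2) (Fin 2) E} (hτ : z⁻¹ • τ ∈ P) (hk : g * τ * g⁻¹ ∈ S.Kset) :
    g * τ * g⁻¹ ∈ S.Zset * (S.Kset ∩ (fun x => g * x * g⁻¹) '' P) := by
  have hconj : g * (z⁻¹ • τ) * g⁻¹ = z⁻¹ • (g * τ * g⁻¹) := by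
    rw [mul_smul_comm, smul_mul_assoc]
  refine ⟨z • 1, ⟨z, hz, rfl⟩, _, ⟨smul_mem_Kset hz.inv hk, _, hτ, hconj⟩, ?_⟩
  show z • 1 * (z⁻¹ • (g * τ * g⁻¹)) = _
  rw [smul_mul_assoc, one_mul, smul_smul, mul_inv_cancel₀ hz.ne_zero, one_smul]

theorem Zset_mul_subset (g : Matrix (Fin 2) (Fin 2) E) (γ₁ γ₂ : E)
    (Q : Set (Matrix (Fin 2) (Fin 2) E)) :
    S.Zset * (S.Kset ∩ (fun x => g * x * g⁻¹) '' (S.Tset γ₁ γ₂ ∩ Q)) ⊆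
      S.Kset ∩ (fun x => g * x * g⁻¹) '' S.Tset γ₁ γ₂ := by
  rintro _ ⟨_, ⟨z, hz, rfl⟩, _, ⟨hk, τ, hτ, rfl⟩, rfl⟩
  show z • 1 * (g * τ * g⁻¹) ∈ _
  rw [smul_mul_assoc, one_mul]
  refine ⟨smul_mem_Kset hz hk, z • τ, smul_mem_Tset hz hτ.1, ?_⟩
  show g * (z • τ) * g⁻¹ = _
  rw [mul_smul_comm, smul_mul_assoc]

variable (S) in
theorem αmat_inv (t : ℕ) : (S.αmat t)⁻¹ = !![S.ϖ ^ t, 0; 0, (S.ϖ ^ t)⁻¹] := by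
  have hϖ : S.ϖ ^ t ≠ 0 := pow_ne_zero t S.ϖ_ne_zero
  refine inv_eq_right_inv ?_
  rw [αmat, mul_fin_two, one_fin_two]
  simp [hϖ]

variable (S) in
theorem wmat_inv : S.wmat⁻¹ = S.wmat := by
  refine inv_eq_right_inv ?_
  rw [wmat, mul_fin_two, one_fin_two]
  simp

theorem inpE_of_conj_αmat_mem_Kset {t : ℕ} {τ : Matrix (Fin 2) (Fin 2) E}
    (hk : S.αmat t * τ * (S.αmat t)⁻¹ ∈ S.Kset) : S.inpE (2 * t) (τ 0 1) := by
  have hϖ : S.inpE t (S.ϖ ^ t) := Or.inr (S.ν_ϖ_pow t).ge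
  have h : τ 0 1 = S.ϖ ^ t * (S.αmat t * τ * (S.αmat t)⁻¹) 0 1 * S.ϖ ^ t := by
    rw [αmat_inv, αmat]
    simp only [cons_mul, empty_mul, Equiv.symm_apply_apply, mul_apply, of_apply, cons_val',
      vecMul, dotProduct, Fin.sum_univ_two, cons_val_zero, cons_val_one, cons_val_fin_one,
      zero_mul, add_zero, zero_add, mul_zero]
    field_simp [pow_ne_zero t S.ϖ_ne_zero]
  rw [h, two_mul]
  simpa using (hϖ.mul (hk.2 0 1)).mul hϖ

theorem inpE_of_conj_αmat_wmat_mem_Kset {t : ℕ} {τ : Matrix (Fin 2) (Fin 2) E}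
    (hk : S.αmat t * S.wmat * τ * (S.αmat t * S.wmat)⁻¹ ∈ S.Kset) :
    S.inpE (2 * t) (τ 1 0) := by
  have h : S.αmat t * S.wmat * τ * (S.αmat t * S.wmat)⁻¹ =
      S.αmat t * (S.wmat * τ * S.wmat) * (S.αmat t)⁻¹ := by
    rw [Matrix.mul_inv_rev, wmat_inv]
    simp only [Matrix.mul_assoc]
  have := inpE_of_conj_αmat_mem_Kset (h ▸ hk)
  simpa [wmat, mul_apply, vecMul, dotProduct, Fin.sum_univ_two] using this

/-- For the tori `T_{γ₁,γ₂}` of the statement, `δ = 2y` with `y` the associated point. -/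
structure TorusDatum (S : Setting E) (γ₁ γ₂ : E) (δ : ℕ) : Prop where
  fixed_fst : S.σ γ₁ = γ₁
  fixed_snd : S.σ γ₂ = γ₂
  fst_ne_zero : γ₁ ≠ 0
  snd_ne_zero : γ₂ ≠ 0
  ν_snd : S.ν γ₂ = S.ν γ₁ + δ

namespace TorusDatum

variable {γ₁ γ₂ : E} {δ : ℕ}

theorem eq (hγ : TorusDatum S γ₁ γ₂ δ) {δ' : ℕ} (hγ' : TorusDatum S γ₁ γ₂ δ') : δ = δ' := by
  have := hγ.ν_snd.symm.trans hγ'.ν_snd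
  omega

theorem inpE_apply_one_zero (hγ : TorusDatum S γ₁ γ₂ δ) {τ : Matrix (Fin 2) (Fin 2) E}
    (hτ : τ ∈ S.Tset γ₁ γ₂) {m : ℤ}
    (h : S.inpE m (τ 0 1)) : S.inpE (m + δ) (τ 1 0) := by
  obtain ⟨a, b, rfl, -⟩ := hτ
  have hratio : S.inpE δ (γ₂ * γ₁⁻¹) := Or.inr <| by
    rw [S.ν_mul hγ.snd_ne_zero (inv_ne_zero hγ.fst_ne_zero), S.ν_inv hγ.fst_ne_zero, hγ.ν_snd]
    omega
  have hb : b * γ₂ = b * γ₁ * (γ₂ * γ₁⁻¹) := by field_simp [hγ.fst_ne_zero]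
  simpa [hb] using h.mul hratio

theorem inpE_apply_zero_one (hγ : TorusDatum S γ₁ γ₂ δ) {τ : Matrix (Fin 2) (Fin 2) E}
    (hτ : τ ∈ S.Tset γ₁ γ₂) {n : ℤ}
    (h : S.inpE n (τ 1 0)) : S.inpE (n - δ) (τ 0 1) := by
  obtain ⟨a, b, rfl, -⟩ := hτ
  have hratio : S.inpE (-δ) (γ₁ * γ₂⁻¹) := Or.inr <| by
    rw [S.ν_mul hγ.fst_ne_zero (inv_ne_zero hγ.snd_ne_zero), S.ν_inv hγ.snd_ne_zero, hγ.ν_snd]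
    omega
  have hb : b * γ₁ = b * γ₂ * (γ₁ * γ₂⁻¹) := by field_simp [hγ.snd_ne_zero]
  simpa [hb, sub_eq_add_neg] using h.mul hratio

end TorusDatum

variable (S)

theorem torusDatum_one_one : TorusDatum S 1 1 0 :=
  ⟨map_one _, map_one _, one_ne_zero, one_ne_zero, by simp⟩

theorem torusDatum_ϖ_inv_ϖ : TorusDatum S S.ϖ⁻¹ S.ϖ 2 := by
  refine ⟨by rw [map_inv₀, S.ϖ_fixed], S.ϖ_fixed, inv_ne_zero S.ϖ_ne_zero, S.ϖ_ne_zero, ?_⟩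
  rw [S.ν_inv S.ϖ_ne_zero, S.ν_ϖ]
  norm_num

theorem torusDatum_one_ϖ : TorusDatum S 1 S.ϖ 1 :=
  ⟨map_one _, S.ϖ_fixed, one_ne_zero, S.ϖ_ne_zero, by rw [S.ν_ϖ, S.ν_one]; norm_num⟩

theorem torusDatum_one_ε_inv_mul_ϖ : TorusDatum S 1 (S.ε⁻¹ * S.ϖ) 1 := by
  refine ⟨map_one _, by rw [map_mul, map_inv₀, S.ε_fixed, S.ϖ_fixed], one_ne_zero,
    mul_ne_zero (inv_ne_zero S.ε_ne_zero) S.ϖ_ne_zero, ?_⟩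
  rw [S.ν_mul (inv_ne_zero S.ε_ne_zero) S.ϖ_ne_zero, S.ν_inv S.ε_ne_zero, S.ν_ε, S.ν_ϖ, S.ν_one]
  norm_num

theorem exists_torusDatum {γ₁ γ₂ : E} {y : ℚ}
    (hpair : ((γ₁, γ₂) = ((1 : E), (1 : E)) ∧ y = 0) ∨
             ((γ₁, γ₂) = (S.ϖ⁻¹, S.ϖ) ∧ y = 1) ∨
             ((γ₁, γ₂) = ((1 : E), S.ϖ) ∧ y = 1/2) ∨
             ((γ₁, γ₂) = ((1 : E), S.ε⁻¹ * S.ϖ) ∧ y = 1/2)) :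
    ∃ δ : ℕ, y = δ / 2 ∧ TorusDatum S γ₁ γ₂ δ := by
  rcases hpair with ⟨h, rfl⟩ | ⟨h, rfl⟩ | ⟨h, rfl⟩ | ⟨h, rfl⟩ <;>
    obtain ⟨rfl, rfl⟩ := Prod.mk.inj h
  · exact ⟨0, by norm_num, S.torusDatum_one_one⟩
  · exact ⟨2, by norm_num, S.torusDatum_ϖ_inv_ϖ⟩
  · exact ⟨1, by norm_num, S.torusDatum_one_ϖ⟩
  · exact ⟨1, by norm_num, S.torusDatum_one_ε_inv_mul_ϖ⟩

theorem torusDatum_of_ramified {γ₁ γ₂ : E}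
    (hram : (γ₁, γ₂) = ((1 : E), S.ϖ) ∨ (γ₁, γ₂) = ((1 : E), S.ε⁻¹ * S.ϖ)) :
    TorusDatum S γ₁ γ₂ 1 := by
  rcases hram with h | h <;> obtain ⟨rfl, rfl⟩ := Prod.mk.inj h
  · exact S.torusDatum_one_ϖ
  · exact S.torusDatum_one_ε_inv_mul_ϖ

end Setting

open Setting in
/-- Let `T = T_{γ₁,γ₂}` with associated point `y`, and let `g = α^t`
(`t ≥ 0`) or, in the ramified case, `g = α^t·w` (`t > 0`).  If `t > 0` or `y ≠ 0`, then
`K ∩ g·T·g⁻¹ = Z·(K ∩ g·T_{0+}·g⁻¹)`, where `T_{0+} = T ∩ G_{y,0+}` and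
`G_{y,0+} = ⋃_{r>0} G_{y,r}`. -/
theorem statement16 {E : Type*} [Field E] (S : Setting E) (γ₁ γ₂ : E) (y : ℚ)
    (hpair : ((γ₁, γ₂) = ((1 : E), (1 : E)) ∧ y = 0) ∨
             ((γ₁, γ₂) = (S.ϖ⁻¹, S.ϖ) ∧ y = 1) ∨
             ((γ₁, γ₂) = ((1 : E), S.ϖ) ∧ y = 1/2) ∨
             ((γ₁, γ₂) = ((1 : E), S.ε⁻¹ * S.ϖ) ∧ y = 1/2))
    (g : Matrix (Fin 2) (Fin 2) E) (t : ℕ)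
    (hg : g = S.αmat t ∨
      (((γ₁, γ₂) = ((1 : E), S.ϖ) ∨ (γ₁, γ₂) = ((1 : E), S.ε⁻¹ * S.ϖ)) ∧
        0 < t ∧ g = S.αmat t * S.wmat))
    (hty : 0 < t ∨ y ≠ 0) :
    S.Kset ∩ ((fun x => g * x * g⁻¹) '' S.Tset γ₁ γ₂) =
      S.Zset *
        (S.Kset ∩ ((fun x => g * x * g⁻¹) '' (S.Tset γ₁ γ₂ ∩ S.Gfil0plus y))) := by
  refine Set.Subset.antisymm ?_ (S.Zset_mul_subset g γ₁ γ₂ _)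
  rintro _ ⟨hk, τ, hτ, rfl⟩
  obtain ⟨δ, rfl, hγ⟩ := S.exists_torusDatum hpair
  obtain ⟨m, h01, h10, hm⟩ : ∃ m : ℤ, S.inpE m (τ 0 1) ∧ S.inpE (m + δ) (τ 1 0) ∧
      1 ≤ 2 * m + δ := by
    rcases hg with rfl | ⟨hram, ht, rfl⟩
    · have h01 := inpE_of_conj_αmat_mem_Kset hk
      refine ⟨2 * t, h01, hγ.inpE_apply_one_zero hτ h01, ?_⟩
      have : 0 < t ∨ 0 < δ :=
        hty.imp_right fun h => Nat.pos_of_ne_zero (by rintro rfl; simp at h)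
      omega
    · obtain rfl := hγ.eq (S.torusDatum_of_ramified hram)
      have h10 := inpE_of_conj_αmat_wmat_mem_Kset hk
      exact ⟨2 * t - 1, hγ.inpE_apply_zero_one hτ h10, by simpa using h10, by omega⟩
  have hm' : (1 : ℚ) ≤ 2 * m + δ := by exact_mod_cast hm
  obtain ⟨z, hz, hzτ⟩ := exists_normOne_inv_smul_mem_Gfil hγ.fixed_fst hγ.fixed_snd
    (y := δ / 2) (by linarith) (by push_cast; linarith) hτ h01 h10
  exact conj_mem_Zset_mul hz ⟨hzτ.1, 1 / 2, by norm_num, hzτ.2⟩ hk
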